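/- arXiv:2210.07389 — 3 statements merged into one kernel-verified Lean document; each statement's English description precedes it below -/
import Mathlib

section
/- There exists an increasing homeomorphism ψ : [-1,1] → [-1,1] with ψ(-1) = -1 and ψ(1) = 1 such that, with λ = (1+√5)/2, the map ψ∘f̃_A∘ψ⁻¹ is affine with slope λ (i.e., of the form x ↦ λx + c for a constant c) on each of the four intervals ψ([-1,-1/2)), ψ([-1/2,0)), ψ((0,1/2)), ψ([1/2,1)), and simultaneously the map ψ∘f̃_H∘ψ⁻¹ is affine with slope λ on each of the four intervals ψ([-1,-1/3)), ψ([-1/3,0)), ψ((0,1/3)), ψ([1/3,1)). -/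
/-!
Both maps commute with `x ↦ -x` up to the conventions at branch endpoints, so `ψ` is the odd
extension of an increasing homeomorphism `h` of `[0, 1]`. Folded by this symmetry, the Artin map
acts on `[0, 1]` as `x ↦ 1 - x` on `[0, 1/2]` and as `T̃⁻¹ x = 2 - 1/x` on `[1/2, 1]`, so `h` must
satisfy `h (1 - x) = 1 - φ h x` and `h (T̃⁻¹ x) = φ h x + 1 - φ`. Solved for `h x`, these equations
define an operator that contracts by `φ⁻¹` and preserves continuous monotone maps of `[0, 1]`
fixing `0` and `1`; `h` is the uniform limit of its iterates.

`h` is injective because `x ↦ T̃⁻¹ (1 - x)` on `[0, 1/2]` and `T̃⁻¹` on `[1/2, 1]` strictly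
lengthen intervals and, by the equations, send pairs `a < b` with `h a = h b` to such pairs; by
compactness there would be a longest one. (A pair straddling `1/2` is split there first.)
-/

/-- The compactified translation `T̃ = k ∘ T ∘ k⁻¹`, `T(x) = x + 1`, on `[-1,1)`. -/
noncomputable def Ttilde (x : ℝ) : ℝ :=
  if x ≤ -1/2 then -2 - 1/x
  else if x ≤ 0 then (1 + 2*x) / (2 + 3*x)
  else 1 / (2 - x)

/-- The compactified inversion `S̃ = k ∘ S ∘ k⁻¹`, `S(x) = -1/x`, on `[-1,1)`. -/
noncomputable def Stilde (x : ℝ) : ℝ :=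
  if x < 0 then x + 1 else if x = 0 then -1 else x - 1

/-- The compactified inverse translation `T̃⁻¹ = k ∘ T⁻¹ ∘ k⁻¹` on `[-1,1)`. -/
noncomputable def Tinvtilde (x : ℝ) : ℝ :=
  if x ≤ 0 then -1 / (2 + x)
  else if x ≤ 1/2 then (1 - 2*x) / (3*x - 2)
  else 2 - 1/x

/-- The compactified `(a,b)`-continued fraction map `f̃_{a,b}` on `[-1,1)`. -/
noncomputable def ftilde (a b : ℝ) (x : ℝ) : ℝ :=
  if x < a / (1 - a) then Ttilde x
  else if x < b / (1 + b) then Stilde x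
  else Tinvtilde x

/-- The Artin map `f̃_A = f̃_{-1,1}`. -/
noncomputable def fA : ℝ → ℝ := ftilde (-1) 1

/-- The Hurwitz map `f̃_H = f̃_{-1/2,1/2}`. -/
noncomputable def fH : ℝ → ℝ := ftilde (-1/2) (1/2)

open Set

theorem injOn_of_forall_exists_longer_levelPair {f : ℝ → ℝ} {s : Set ℝ} (hs : IsCompact s)
    (hf : ContinuousOn f s)
    (h : ∀ a ∈ s, ∀ b ∈ s, a < b → f a = f b → ∃ a' ∈ s, ∃ b' ∈ s, b - a < b' - a' ∧ f a' = f b') :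
    InjOn f s := by
  set P := s ×ˢ s ∩ (fun p : ℝ × ℝ => f p.1 - f p.2) ⁻¹' {0}
  have hP : IsCompact P := by
    refine (hs.prod hs).of_isClosed_subset ?_ inter_subset_left
    exact ContinuousOn.preimage_isClosed_of_isClosed
      ((hf.comp continuousOn_fst fun p hp => hp.1).sub (hf.comp continuousOn_snd fun p hp => hp.2))
      (hs.isClosed.prod hs.isClosed) isClosed_singleton
  have hne : ∀ a ∈ s, ∀ b ∈ s, a < b → f a ≠ f b := by
    intro a ha b hb hab heq
    obtain ⟨p, ⟨⟨hp₁, hp₂⟩, hp⟩, hmax⟩ := hP.exists_isMaxOn ⟨(a, b), ⟨ha, hb⟩, sub_eq_zero.2 heq⟩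
      (continuous_snd.sub continuous_fst).continuousOn
    have hab' : b - a ≤ p.2 - p.1 := hmax (show (a, b) ∈ P from ⟨⟨ha, hb⟩, sub_eq_zero.2 heq⟩)
    obtain ⟨a', ha', b', hb', hlonger, heq'⟩ :=
      h p.1 hp₁ p.2 hp₂ (by linarith) (sub_eq_zero.1 hp)
    exact hlonger.not_ge (hmax (show (a', b') ∈ P from ⟨⟨ha', hb'⟩, sub_eq_zero.2 heq'⟩))
  intro a ha b hb heq
  by_contra hab
  rcases lt_or_gt_of_ne hab with hab | hab
  exacts [hne a ha b hb hab heq, hne b hb a ha hab heq.symm]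

def oddExt (g : ℝ → ℝ) (x : ℝ) : ℝ := g (max x 0) - g (max (-x) 0)

section OddExt

variable {g : ℝ → ℝ} {x c : ℝ}

theorem oddExt_of_nonneg (hg : g 0 = 0) (hx : 0 ≤ x) : oddExt g x = g x := by
  simp [oddExt, hx, hg]

theorem oddExt_of_nonpos (hg : g 0 = 0) (hx : x ≤ 0) : oddExt g x = -g (-x) := by
  simp [oddExt, hx, hg]

theorem ContinuousOn.oddExt (hg : ContinuousOn g (Icc 0 c)) :
    ContinuousOn (oddExt g) (Icc (-c) c) := by
  have hmaps : ∀ {u : ℝ → ℝ}, MapsTo u (Icc (-c) c) (Icc (-c) c) →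
      MapsTo (fun x => max (u x) 0) (Icc (-c) c) (Icc 0 c) :=
    fun hu x hx => ⟨le_max_right _ _, max_le (hu hx).2 (by linarith [hx.1, hx.2])⟩
  exact (hg.comp (by fun_prop) (hmaps fun x hx => hx)).sub
    (hg.comp (by fun_prop) (hmaps fun x hx => ⟨by linarith [hx.2], by linarith [hx.1]⟩))

theorem StrictMonoOn.oddExt (hg0 : g 0 = 0) (hg : StrictMonoOn g (Icc 0 c)) :
    StrictMonoOn (oddExt g) (Icc (-c) c) := by
  intro x hx y hy hxy
  rcases le_or_gt 0 x with hx0 | hx0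
  · rw [oddExt_of_nonneg hg0 hx0, oddExt_of_nonneg hg0 (hx0.trans hxy.le)]
    exact hg ⟨hx0, hx.2⟩ ⟨hx0.trans hxy.le, hy.2⟩ hxy
  rcases le_or_gt y 0 with hy0 | hy0
  · rw [oddExt_of_nonpos hg0 hx0.le, oddExt_of_nonpos hg0 hy0, neg_lt_neg_iff]
    exact hg ⟨neg_nonneg.2 hy0, by linarith [hy.1]⟩ ⟨by linarith, by linarith [hx.1]⟩ (by linarith)
  · rw [oddExt_of_nonpos hg0 hx0.le, oddExt_of_nonneg hg0 hy0.le]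
    have h0 : (0 : ℝ) ∈ Icc 0 c := ⟨le_rfl, hy0.le.trans hy.2⟩
    have hneg : g 0 < g (-x) := hg h0 ⟨by linarith, by linarith [hx.1]⟩ (by linarith)
    have hpos : g 0 < g y := hg h0 ⟨hy0.le, hy.2⟩ hy0
    linarith

end OddExt

namespace ArtinHurwitz

open Filter Topology Real goldenRatio

-- The branch of `T̃⁻¹` on `[1/2, 1]`.
noncomputable def invTransl (x : ℝ) : ℝ := 2 - 1 / x

theorem invTransl_half : invTransl (1 / 2) = 0 := by norm_num [invTransl]

theorem invTransl_one : invTransl 1 = 1 := by norm_num [invTransl]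

theorem mapsTo_invTransl : MapsTo invTransl (Icc (1 / 2) 1) (Icc 0 1) := by
  intro x ⟨hx₁, hx₂⟩
  have hx : 0 < x := by linarith
  have h₁ : 1 ≤ 1 / x := by rw [le_div_iff₀ hx]; linarith
  have h₂ : 1 / x ≤ 2 := by rw [div_le_iff₀ hx]; linarith
  exact ⟨by unfold invTransl; linarith, by unfold invTransl; linarith⟩

theorem monotoneOn_invTransl : MonotoneOn invTransl (Ioi 0) := fun x hx y _ hxy => by
  unfold invTransl
  linarith [one_div_le_one_div_of_le (mem_Ioi.1 hx) hxy]

theorem continuousOn_invTransl : ContinuousOn invTransl (Icc (1 / 2) 1) :=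
  continuousOn_const.sub <| continuousOn_const.div continuousOn_id fun x hx => by
    linarith [hx.1]

theorem mapsTo_one_sub : MapsTo (fun x : ℝ => 1 - x) (Icc 0 (1 / 2)) (Icc (1 / 2) 1) :=
  fun _ hx => ⟨by linarith [hx.2], by linarith [hx.1]⟩

theorem Icc_zero_one_eq_union : Icc (0 : ℝ) 1 = Icc 0 (1 / 2) ∪ Icc (1 / 2) 1 :=
  (Icc_union_Icc_eq_Icc (by norm_num) (by norm_num)).symm

structure IsAdmissible (g : ℝ → ℝ) : Prop where
  map_zero : g 0 = 0
  map_one : g 1 = 1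
  monotoneOn : MonotoneOn g (Icc 0 1)
  continuousOn : ContinuousOn g (Icc 0 1)

theorem IsAdmissible.mapsTo {g : ℝ → ℝ} (hg : IsAdmissible g) : MapsTo g (Icc 0 1) (Icc 0 1) :=
  fun _ hx => ⟨hg.map_zero ▸ hg.monotoneOn (left_mem_Icc.2 zero_le_one) hx hx.1,
    hg.map_one ▸ hg.monotoneOn hx (right_mem_Icc.2 zero_le_one) hx.2⟩

/- Solving `h (T̃⁻¹ (1 - x)) = 1 - φ² h x` on `[0, 1/2]` and `h (T̃⁻¹ x) = φ h x + 1 - φ`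
on `[1/2, 1]` for `h x`. -/
noncomputable def conjOp (g : ℝ → ℝ) (x : ℝ) : ℝ :=
  if x ≤ 1 / 2 then (1 - g (invTransl (1 - x))) / φ ^ 2 else (g (invTransl x) + φ - 1) / φ

section conjOp

variable {g : ℝ → ℝ}

theorem conjOp_eqOn_left :
    EqOn (conjOp g) (fun x => (1 - g (invTransl (1 - x))) / φ ^ 2) (Icc 0 (1 / 2)) :=
  fun _ hx => if_pos hx.2

theorem conjOp_eqOn_right (hg : g 0 = 0) :
    EqOn (conjOp g) (fun x => (g (invTransl x) + φ - 1) / φ) (Icc (1 / 2) 1) := by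
  intro x hx
  rcases hx.1.eq_or_lt with rfl | hx'
  · have : (1 : ℝ) - 1 / 2 = 1 / 2 := by norm_num
    simp only [conjOp, le_rfl, if_true, this, invTransl_half, hg]
    rw [div_eq_div_iff (pow_ne_zero 2 goldenRatio_ne_zero) goldenRatio_ne_zero]
    linear_combination (-φ) * goldenRatio_sq
  · exact if_neg (not_le.2 hx')

theorem conjOp_zero (hg : g 1 = 1) : conjOp g 0 = 0 := by
  simp [conjOp, invTransl_one, hg]

theorem conjOp_one (hg : g 1 = 1) : conjOp g 1 = 1 := by
  rw [conjOp, if_neg (by norm_num), invTransl_one, hg]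
  field_simp
  ring

theorem isAdmissible_conjOp (hg : IsAdmissible g) : IsAdmissible (conjOp g) where
  map_zero := conjOp_zero hg.map_one
  map_one := conjOp_one hg.map_one
  monotoneOn := by
    have hleft : MonotoneOn (conjOp g) (Icc 0 (1 / 2)) := by
      refine MonotoneOn.congr (fun x hx y hy hxy => ?_) conjOp_eqOn_left.symm
      have := hg.monotoneOn (mapsTo_invTransl (mapsTo_one_sub hy))
        (mapsTo_invTransl (mapsTo_one_sub hx)) (monotoneOn_invTransl
          (show 0 < 1 - y by linarith [hy.2]) (show 0 < 1 - x by linarith [hx.2]) (by linarith))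
      gcongr
    have hright : MonotoneOn (conjOp g) (Icc (1 / 2) 1) := by
      refine MonotoneOn.congr (fun x hx y hy hxy => ?_) (conjOp_eqOn_right hg.map_zero).symm
      have := hg.monotoneOn (mapsTo_invTransl hx) (mapsTo_invTransl hy)
        (monotoneOn_invTransl (show 0 < x by linarith [hx.1]) (show 0 < y by linarith [hy.1]) hxy)
      gcongr
    rw [Icc_zero_one_eq_union]
    exact hleft.union_right hright (isGreatest_Icc (by norm_num)) (isLeast_Icc (by norm_num))
  continuousOn := by
    have hleft : ContinuousOn (conjOp g) (Icc 0 (1 / 2)) := by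
      refine ContinuousOn.congr ?_ conjOp_eqOn_left
      exact (continuousOn_const.sub (hg.continuousOn.comp
        (continuousOn_invTransl.comp (by fun_prop) mapsTo_one_sub)
        (mapsTo_invTransl.comp mapsTo_one_sub))).div_const _
    have hright : ContinuousOn (conjOp g) (Icc (1 / 2) 1) :=
      ContinuousOn.congr (((hg.continuousOn.comp continuousOn_invTransl mapsTo_invTransl).add
        continuousOn_const).sub continuousOn_const |>.div_const _) (conjOp_eqOn_right hg.map_zero)
    rw [Icc_zero_one_eq_union]
    exact hleft.union_of_isClosed hright isClosed_Icc isClosed_Icc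

theorem abs_conjOp_sub_le {g' : ℝ → ℝ} {ε x : ℝ} (h : ∀ y ∈ Icc (0 : ℝ) 1, |g y - g' y| ≤ ε)
    (hx : x ∈ Icc (0 : ℝ) 1) : |conjOp g x - conjOp g' x| ≤ φ⁻¹ * ε := by
  have hφ := one_lt_goldenRatio
  unfold conjOp
  split_ifs with hx'
  · have hy := h (invTransl (1 - x)) (mapsTo_invTransl (mapsTo_one_sub ⟨hx.1, hx'⟩))
    rw [← sub_div, sub_sub_sub_cancel_left, abs_div, abs_sub_comm,
      abs_of_pos (pow_pos goldenRatio_pos 2), div_eq_inv_mul]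
    exact mul_le_mul (inv_anti₀ goldenRatio_pos (le_self_pow₀ hφ.le two_ne_zero)) hy
      (abs_nonneg _) (inv_nonneg.2 goldenRatio_pos.le)
  · have hy := h (invTransl x) (mapsTo_invTransl ⟨by linarith, hx.2⟩)
    rw [← sub_div, sub_sub_sub_cancel_right, add_sub_add_right_eq_sub, abs_div,
      abs_of_pos goldenRatio_pos, div_eq_inv_mul]
    exact mul_le_mul_of_nonneg_left hy (inv_nonneg.2 goldenRatio_pos.le)

theorem tendsto_conjOp {G : ℕ → ℝ → ℝ} {x : ℝ}
    (hG : ∀ y ∈ Icc (0 : ℝ) 1, Tendsto (fun n => G n y) atTop (𝓝 (g y)))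
    (hx : x ∈ Icc (0 : ℝ) 1) : Tendsto (fun n => conjOp (G n) x) atTop (𝓝 (conjOp g x)) := by
  unfold conjOp
  split_ifs with hx'
  · exact (tendsto_const_nhds.sub
      (hG _ (mapsTo_invTransl (mapsTo_one_sub ⟨hx.1, hx'⟩)))).div_const _
  · exact (((hG _ (mapsTo_invTransl ⟨by linarith, hx.2⟩)).add_const _).sub_const _).div_const _

end conjOp

noncomputable def conjSeq (n : ℕ) : ℝ → ℝ := conjOp^[n] id

theorem conjSeq_succ (n : ℕ) : conjSeq (n + 1) = conjOp (conjSeq n) :=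
  Function.iterate_succ_apply' _ _ _

theorem isAdmissible_conjSeq (n : ℕ) : IsAdmissible (conjSeq n) := by
  induction n with
  | zero => exact ⟨rfl, rfl, monotoneOn_id, continuousOn_id⟩
  | succ n ih => rw [conjSeq_succ]; exact isAdmissible_conjOp ih

theorem abs_conjSeq_succ_sub_le (n : ℕ) {x : ℝ} (hx : x ∈ Icc (0 : ℝ) 1) :
    |conjSeq (n + 1) x - conjSeq n x| ≤ φ⁻¹ ^ n := by
  induction n generalizing x with
  | zero =>
    have h₁ := (isAdmissible_conjSeq 1).mapsTo hx
    change |conjSeq 1 x - x| ≤ 1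
    rw [abs_le]
    exact ⟨by linarith [h₁.1, hx.2], by linarith [h₁.2, hx.1]⟩
  | succ n ih =>
    have h := abs_conjOp_sub_le (fun y hy => ih hy) hx
    rwa [← conjSeq_succ, ← conjSeq_succ, ← pow_succ'] at h

noncomputable def halfConj (x : ℝ) : ℝ := limUnder atTop fun n => conjSeq n x

theorem tendstoUniformlyOn_conjSeq : TendstoUniformlyOn conjSeq halfConj atTop (Icc 0 1) := by
  have hseries := tendstoUniformlyOn_tsum_nat (f := fun n x => conjSeq (n + 1) x - conjSeq n x)
    (summable_geometric_of_lt_one (inv_nonneg.2 goldenRatio_pos.le)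
      (inv_lt_one_of_one_lt₀ one_lt_goldenRatio))
    fun n x hx => (Real.norm_eq_abs _).trans_le (abs_conjSeq_succ_sub_le n hx)
  have hid : TendstoUniformlyOn (fun _ : ℕ => id) id atTop (Icc (0 : ℝ) 1) :=
    fun u hu => .of_forall fun _ _ _ => refl_mem_uniformity hu
  have hlim := hid.add hseries
  have htelescope : (fun _ : ℕ => id) + (fun N x => ∑ n ∈ Finset.range N,
      (conjSeq (n + 1) x - conjSeq n x)) = conjSeq := by
    funext N x
    simp only [Pi.add_apply, id, Finset.sum_range_sub (fun n => conjSeq n x)]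
    exact add_sub_cancel x _
  rw [htelescope] at hlim
  exact hlim.congr_right fun x hx => (hlim.tendsto_at hx).limUnder_eq.symm

theorem tendsto_conjSeq {x : ℝ} (hx : x ∈ Icc (0 : ℝ) 1) :
    Tendsto (fun n => conjSeq n x) atTop (𝓝 (halfConj x)) :=
  tendstoUniformlyOn_conjSeq.tendsto_at hx

theorem isAdmissible_halfConj : IsAdmissible halfConj where
  map_zero := tendsto_nhds_unique (tendsto_conjSeq (left_mem_Icc.2 zero_le_one)) <| by
    simp only [fun n => (isAdmissible_conjSeq n).map_zero, tendsto_const_nhds]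
  map_one := tendsto_nhds_unique (tendsto_conjSeq (right_mem_Icc.2 zero_le_one)) <| by
    simp only [fun n => (isAdmissible_conjSeq n).map_one, tendsto_const_nhds]
  monotoneOn := fun _ hx _ hy hxy => le_of_tendsto_of_tendsto' (tendsto_conjSeq hx)
    (tendsto_conjSeq hy) fun n => (isAdmissible_conjSeq n).monotoneOn hx hy hxy
  continuousOn := tendstoUniformlyOn_conjSeq.continuousOn
    (.of_forall fun n => (isAdmissible_conjSeq n).continuousOn)

theorem halfConj_eq_conjOp {x : ℝ} (hx : x ∈ Icc (0 : ℝ) 1) : halfConj x = conjOp halfConj x := by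
  refine tendsto_nhds_unique ((tendsto_add_atTop_iff_nat 1).2 (tendsto_conjSeq hx)) ?_
  simp_rw [conjSeq_succ]
  exact tendsto_conjOp (fun y hy => tendsto_conjSeq hy) hx

section equations

variable {x : ℝ}

theorem halfConj_invTransl_one_sub (hx : x ∈ Icc (0 : ℝ) (1 / 2)) :
    halfConj (invTransl (1 - x)) = 1 - φ ^ 2 * halfConj x := by
  have h := halfConj_eq_conjOp ⟨hx.1, by linarith [hx.2]⟩
  rw [conjOp_eqOn_left hx, eq_div_iff (pow_ne_zero 2 goldenRatio_ne_zero)] at h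
  linarith

theorem halfConj_invTransl (hx : x ∈ Icc (1 / 2 : ℝ) 1) :
    halfConj (invTransl x) = φ * halfConj x + (1 - φ) := by
  have h := halfConj_eq_conjOp ⟨by linarith [hx.1], hx.2⟩
  rw [conjOp_eqOn_right isAdmissible_halfConj.map_zero hx, eq_div_iff goldenRatio_ne_zero] at h
  linarith

theorem halfConj_one_sub (hx : x ∈ Icc (0 : ℝ) (1 / 2)) :
    halfConj (1 - x) = 1 - φ * halfConj x := by
  have h := halfConj_invTransl (mapsTo_one_sub hx)
  rw [halfConj_invTransl_one_sub hx] at h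
  apply mul_left_cancel₀ goldenRatio_ne_zero
  linear_combination -h

end equations

theorem invTransl_sub_invTransl {x y : ℝ} (hx : x ≠ 0) (hy : y ≠ 0) :
    invTransl y - invTransl x = (y - x) / (x * y) := by
  unfold invTransl
  field_simp
  ring

theorem exists_longer_levelPair_of_straddle {a b : ℝ} (ha : 0 ≤ a) (hb : b ≤ 1)
    (ha' : a < 1 / 2) (hb' : 1 / 2 < b) (heq : halfConj a = halfConj b) :
    ∃ a' ∈ Icc (0 : ℝ) 1, ∃ b' ∈ Icc (0 : ℝ) 1, b - a < b' - a' ∧ halfConj a' = halfConj b' := by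
  have hφ := one_lt_goldenRatio
  have hhalf := halfConj_invTransl (x := 1 / 2) ⟨le_rfl, by norm_num⟩
  rw [invTransl_half, isAdmissible_halfConj.map_zero] at hhalf
  have hmono := isAdmissible_halfConj.monotoneOn
  have hmid : (1 / 2 : ℝ) ∈ Icc 0 1 := ⟨by norm_num, by norm_num⟩
  have ha_eq : halfConj a = halfConj (1 / 2) := le_antisymm (hmono ⟨ha, by linarith⟩ hmid ha'.le)
    (heq ▸ hmono hmid ⟨by linarith, hb⟩ hb'.le)
  have ha0 : 0 < a := ha.lt_of_ne fun h => by
    rw [← h, isAdmissible_halfConj.map_zero] at ha_eq; nlinarith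
  have hb1 : b < 1 := hb.lt_of_ne fun h => by
    rw [heq, h, isAdmissible_halfConj.map_one] at ha_eq; nlinarith
  have hK : ∀ x ∈ Icc (1 / 2 : ℝ) 1, invTransl x - invTransl (1 / 2) = (2 * x - 1) / x := by
    intro x hx
    rw [invTransl_sub_invTransl (by norm_num) (by linarith [hx.1])]
    field_simp
  rcases le_or_gt (a + b) 1 with hab | hab
  · have hmem : 1 - a ∈ Icc (1 / 2 : ℝ) 1 := mapsTo_one_sub ⟨ha, ha'.le⟩
    refine ⟨_, mapsTo_invTransl ⟨le_rfl, by norm_num⟩, _, mapsTo_invTransl hmem, ?_, ?_⟩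
    · rw [hK _ hmem, lt_div_iff₀ (by linarith)]
      nlinarith
    · have := halfConj_invTransl_one_sub (x := 1 / 2) ⟨by norm_num, le_rfl⟩
      rw [show (1 : ℝ) - 1 / 2 = 1 / 2 by norm_num] at this
      rw [this, halfConj_invTransl_one_sub ⟨ha, ha'.le⟩, ha_eq]
  · have hmem : b ∈ Icc (1 / 2 : ℝ) 1 := ⟨hb'.le, hb⟩
    refine ⟨_, mapsTo_invTransl ⟨le_rfl, by norm_num⟩, _, mapsTo_invTransl hmem, ?_, ?_⟩
    · rw [hK _ hmem, lt_div_iff₀ (by linarith)]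
      nlinarith
    · rw [halfConj_invTransl ⟨le_rfl, by norm_num⟩, halfConj_invTransl hmem, ← heq, ha_eq]

theorem exists_longer_levelPair {a b : ℝ} (ha : a ∈ Icc (0 : ℝ) 1) (hb : b ∈ Icc (0 : ℝ) 1)
    (hab : a < b) (heq : halfConj a = halfConj b) :
    ∃ a' ∈ Icc (0 : ℝ) 1, ∃ b' ∈ Icc (0 : ℝ) 1, b - a < b' - a' ∧ halfConj a' = halfConj b' := by
  rcases le_or_gt b (1 / 2) with hb' | hb'
  · refine ⟨_, mapsTo_invTransl (mapsTo_one_sub ⟨by linarith [ha.1], hb'⟩), _,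
      mapsTo_invTransl (mapsTo_one_sub ⟨ha.1, by linarith⟩), ?_, ?_⟩
    · have hd : (1 - b) * (1 - a) < 1 := by nlinarith [mul_nonneg ha.1 (sub_nonneg.2 hb.2)]
      rw [invTransl_sub_invTransl (by linarith) (by linarith), lt_div_iff₀ (by nlinarith)]
      nlinarith [mul_lt_mul_of_pos_left hd (sub_pos.2 hab)]
    · rw [halfConj_invTransl_one_sub ⟨by linarith [ha.1], hb'⟩,
        halfConj_invTransl_one_sub ⟨ha.1, by linarith⟩, heq]
  rcases le_or_gt (1 / 2) a with ha' | ha'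
  · refine ⟨_, mapsTo_invTransl ⟨ha', ha.2⟩, _, mapsTo_invTransl ⟨by linarith, hb.2⟩, ?_, ?_⟩
    · have hd : a * b < 1 := by nlinarith [mul_le_mul_of_nonneg_left hb.2 ha.1]
      rw [invTransl_sub_invTransl (by linarith) (by linarith), lt_div_iff₀ (by nlinarith)]
      nlinarith [mul_lt_mul_of_pos_left hd (sub_pos.2 hab)]
    · rw [halfConj_invTransl ⟨ha', ha.2⟩, halfConj_invTransl ⟨by linarith, hb.2⟩, heq]
  exact exists_longer_levelPair_of_straddle ha.1 hb.2 ha' hb' heq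

theorem strictMonoOn_halfConj : StrictMonoOn halfConj (Icc 0 1) :=
  isAdmissible_halfConj.monotoneOn.strictMonoOn_of_injOn <|
    injOn_of_forall_exists_longer_levelPair isCompact_Icc isAdmissible_halfConj.continuousOn
      fun _ ha _ hb => exists_longer_levelPair ha hb

-- The branch of `T̃` on `[-1/2, -1/3]`, conjugated by `x ↦ -x`.
noncomputable def hurwitzFlip (x : ℝ) : ℝ := (1 - 2 * x) / (2 - 3 * x)

theorem mapsTo_hurwitzFlip : MapsTo hurwitzFlip (Icc (1 / 3) (1 / 2)) (Icc 0 (1 / 3)) := by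
  intro x ⟨hx₁, hx₂⟩
  have hd : 0 < 2 - 3 * x := by linarith
  exact ⟨div_nonneg (by linarith) hd.le, by rw [hurwitzFlip, div_le_iff₀ hd]; linarith⟩

-- `x ↦ T̃⁻¹ (1 - x)` sends `x` and `hurwitzFlip x` to points symmetric about `1/2`.
theorem halfConj_hurwitzFlip {x : ℝ} (hx : x ∈ Icc (1 / 3 : ℝ) (1 / 2)) :
    halfConj (hurwitzFlip x) = φ - 1 - φ * halfConj x := by
  have hs := mapsTo_hurwitzFlip hx
  have hy : invTransl (1 - x) ∈ Icc (0 : ℝ) (1 / 2) := by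
    have h := mapsTo_invTransl (x := 1 - x) ⟨by linarith [hx.2], by linarith [hx.1]⟩
    refine ⟨h.1, ?_⟩
    unfold invTransl
    rw [sub_le_iff_le_add, ← sub_le_iff_le_add', le_div_iff₀ (by linarith [hx.2])]
    linarith [hx.1]
  have hsym : invTransl (1 - hurwitzFlip x) = 1 - invTransl (1 - x) := by
    have h₁ : (2 : ℝ) - 3 * x ≠ 0 := by linarith [hx.2]
    have h₂ : (1 : ℝ) - x ≠ 0 := by linarith [hx.2]
    have h₃ : 1 - hurwitzFlip x = (1 - x) / (2 - 3 * x) := by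
      rw [hurwitzFlip, one_sub_div h₁]
      ring
    rw [h₃]
    unfold invTransl
    rw [one_div_div]
    field_simp
    ring
  have e₁ := halfConj_invTransl_one_sub ⟨by linarith [hx.1], hx.2⟩
  have e₂ := halfConj_one_sub hy
  have e₃ := halfConj_invTransl_one_sub ⟨hs.1, by linarith [hs.2]⟩
  rw [hsym, e₂] at e₃
  apply mul_left_cancel₀ (pow_ne_zero 2 goldenRatio_ne_zero)
  linear_combination e₃ + φ * e₁ - φ * goldenRatio_sq

noncomputable def conjugacy : ℝ → ℝ := oddExt halfConj

section conjugacy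

variable {x : ℝ}

theorem conjugacy_of_nonneg (hx : 0 ≤ x) : conjugacy x = halfConj x :=
  oddExt_of_nonneg isAdmissible_halfConj.map_zero hx

theorem conjugacy_of_nonpos (hx : x ≤ 0) : conjugacy x = -halfConj (-x) :=
  oddExt_of_nonpos isAdmissible_halfConj.map_zero hx

theorem continuousOn_conjugacy : ContinuousOn conjugacy (Icc (-1) 1) :=
  isAdmissible_halfConj.continuousOn.oddExt

theorem strictMonoOn_conjugacy : StrictMonoOn conjugacy (Icc (-1) 1) :=
  strictMonoOn_halfConj.oddExt isAdmissible_halfConj.map_zero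

theorem conjugacy_one : conjugacy 1 = 1 := by
  rw [conjugacy_of_nonneg zero_le_one, isAdmissible_halfConj.map_one]

theorem conjugacy_neg_one : conjugacy (-1) = -1 := by
  rw [conjugacy_of_nonpos (by norm_num), neg_neg, isAdmissible_halfConj.map_one]

theorem conjugacy_Ttilde (hx : x ∈ Icc (-1 : ℝ) (-1 / 3)) :
    conjugacy (Ttilde x) = φ * conjugacy x + (φ - 1) := by
  rw [conjugacy_of_nonpos (x := x) (by linarith [hx.2])]
  rcases le_or_gt x (-1 / 2) with hx' | hx'
  · have hmem : -x ∈ Icc (1 / 2 : ℝ) 1 := ⟨by linarith, by linarith [hx.1]⟩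
    have hT : Ttilde x = -invTransl (-x) := by
      rw [Ttilde, if_pos hx', invTransl, div_neg]
      ring
    rw [hT, conjugacy_of_nonpos (neg_nonpos.2 (mapsTo_invTransl hmem).1), neg_neg,
      halfConj_invTransl hmem]
    ring
  · have hmem : -x ∈ Icc (1 / 3 : ℝ) (1 / 2) := ⟨by linarith [hx.2], by linarith⟩
    have hT : Ttilde x = hurwitzFlip (-x) := by
      rw [Ttilde, if_neg (not_le.2 hx'), if_pos (by linarith [hx.2]), hurwitzFlip]
      ring_nf
    rw [hT, conjugacy_of_nonneg (mapsTo_hurwitzFlip hmem).1, halfConj_hurwitzFlip hmem]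
    ring

theorem conjugacy_Stilde_of_neg (hx : x ∈ Ico (-1 / 2 : ℝ) 0) :
    conjugacy (Stilde x) = φ * conjugacy x + 1 := by
  rw [Stilde, if_pos hx.2, conjugacy_of_nonneg (by linarith [hx.1]), conjugacy_of_nonpos hx.2.le,
    show x + 1 = 1 - -x by ring, halfConj_one_sub ⟨by linarith [hx.2], by linarith [hx.1]⟩]
  ring

theorem conjugacy_Stilde_of_pos (hx : x ∈ Ioc (0 : ℝ) (1 / 2)) :
    conjugacy (Stilde x) = φ * conjugacy x - 1 := by
  rw [Stilde, if_neg (not_lt.2 hx.1.le), if_neg hx.1.ne', conjugacy_of_nonpos (by linarith [hx.2]),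
    conjugacy_of_nonneg hx.1.le, neg_sub, halfConj_one_sub ⟨hx.1.le, hx.2⟩]
  ring

theorem conjugacy_Tinvtilde (hx : x ∈ Icc (1 / 3 : ℝ) 1) :
    conjugacy (Tinvtilde x) = φ * conjugacy x + (1 - φ) := by
  rw [conjugacy_of_nonneg (x := x) (by linarith [hx.1]), Tinvtilde, if_neg (by linarith [hx.1])]
  rcases le_or_gt x (1 / 2) with hx' | hx'
  · have hmem : x ∈ Icc (1 / 3 : ℝ) (1 / 2) := ⟨hx.1, hx'⟩
    have hT : (1 - 2 * x) / (3 * x - 2) = -hurwitzFlip x := by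
      rw [hurwitzFlip, ← div_neg, neg_sub]
    rw [if_pos hx', hT, conjugacy_of_nonpos (neg_nonpos.2 (mapsTo_hurwitzFlip hmem).1), neg_neg,
      halfConj_hurwitzFlip hmem]
    ring
  · rw [if_neg (not_le.2 hx'), ← invTransl, conjugacy_of_nonneg (mapsTo_invTransl ⟨hx'.le, hx.2⟩).1,
      halfConj_invTransl ⟨hx'.le, hx.2⟩]

end conjugacy

section ftilde

variable {a b x : ℝ}

theorem conjugacy_ftilde_of_lt (ha : a / (1 - a) ≤ -1 / 3) (hx : x ∈ Ico (-1) (a / (1 - a))) :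
    conjugacy (ftilde a b x) = φ * conjugacy x + (φ - 1) := by
  rw [ftilde, if_pos hx.2]
  exact conjugacy_Ttilde ⟨hx.1, by linarith [hx.2]⟩

theorem conjugacy_ftilde_of_neg (ha : -1 / 2 ≤ a / (1 - a)) (hb : 0 ≤ b / (1 + b))
    (hx : x ∈ Ico (a / (1 - a)) 0) : conjugacy (ftilde a b x) = φ * conjugacy x + 1 := by
  rw [ftilde, if_neg (not_lt.2 hx.1), if_pos (by linarith [hx.2])]
  exact conjugacy_Stilde_of_neg ⟨by linarith [hx.1], hx.2⟩

theorem conjugacy_ftilde_of_pos (ha : a / (1 - a) ≤ 0) (hb : b / (1 + b) ≤ 1 / 2)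
    (hx : x ∈ Ioo 0 (b / (1 + b))) : conjugacy (ftilde a b x) = φ * conjugacy x - 1 := by
  rw [ftilde, if_neg (by linarith [hx.1]), if_pos hx.2]
  exact conjugacy_Stilde_of_pos ⟨hx.1, by linarith [hx.2]⟩

theorem conjugacy_ftilde_of_ge (hab : a / (1 - a) ≤ b / (1 + b)) (hb : 1 / 3 ≤ b / (1 + b))
    (hx : x ∈ Ico (b / (1 + b)) 1) : conjugacy (ftilde a b x) = φ * conjugacy x + (1 - φ) := by
  rw [ftilde, if_neg (by linarith [hx.1]), if_neg (not_lt.2 hx.1)]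
  exact conjugacy_Tinvtilde ⟨by linarith [hx.1], hx.2.le⟩

end ftilde

end ArtinHurwitz

open ArtinHurwitz

/-- There is an increasing homeomorphism `ψ` of `[-1,1]` fixing `±1` that simultaneously
conjugates the Artin map `f̃_A` and the Hurwitz map `f̃_H` to maps of constant slope
`λ = (1+√5)/2`: `ψ ∘ f̃_A ∘ ψ⁻¹` is affine with slope `λ` on each of
`ψ([-1,-1/2))`, `ψ([-1/2,0))`, `ψ((0,1/2))`, `ψ([1/2,1))`, and `ψ ∘ f̃_H ∘ ψ⁻¹` is affine
with slope `λ` on each of `ψ([-1,-1/3))`, `ψ([-1/3,0))`, `ψ((0,1/3))`, `ψ([1/3,1))`.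
(The condition "`ψ ∘ f ∘ ψ⁻¹` is affine with slope `λ` on `ψ(I)`" is expressed
equivalently as `∃ c, ∀ x ∈ I, ψ (f x) = λ * ψ x + c`.) -/
theorem exists_common_conjugacy_to_constant_slope :
    ∃ ψ : ℝ → ℝ,
      ContinuousOn ψ (Set.Icc (-1) 1) ∧ StrictMonoOn ψ (Set.Icc (-1) 1) ∧
      ψ (-1) = -1 ∧ ψ 1 = 1 ∧
      (∃ c, ∀ x ∈ Set.Ico (-1 : ℝ) (-1/2),
        ψ (fA x) = (1 + Real.sqrt 5) / 2 * ψ x + c) ∧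
      (∃ c, ∀ x ∈ Set.Ico (-1/2 : ℝ) 0,
        ψ (fA x) = (1 + Real.sqrt 5) / 2 * ψ x + c) ∧
      (∃ c, ∀ x ∈ Set.Ioo (0 : ℝ) (1/2),
        ψ (fA x) = (1 + Real.sqrt 5) / 2 * ψ x + c) ∧
      (∃ c, ∀ x ∈ Set.Ico (1/2 : ℝ) 1,
        ψ (fA x) = (1 + Real.sqrt 5) / 2 * ψ x + c) ∧
      (∃ c, ∀ x ∈ Set.Ico (-1 : ℝ) (-1/3),
        ψ (fH x) = (1 + Real.sqrt 5) / 2 * ψ x + c) ∧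
      (∃ c, ∀ x ∈ Set.Ico (-1/3 : ℝ) 0,
        ψ (fH x) = (1 + Real.sqrt 5) / 2 * ψ x + c) ∧
      (∃ c, ∀ x ∈ Set.Ioo (0 : ℝ) (1/3),
        ψ (fH x) = (1 + Real.sqrt 5) / 2 * ψ x + c) ∧
      (∃ c, ∀ x ∈ Set.Ico (1/3 : ℝ) 1,
        ψ (fH x) = (1 + Real.sqrt 5) / 2 * ψ x + c) := by
  refine ⟨conjugacy, continuousOn_conjugacy, strictMonoOn_conjugacy, conjugacy_neg_one,
    conjugacy_one, ?_, ?_, ?_, ?_, ?_, ?_, ?_, ?_⟩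
  · exact ⟨_, fun x hx => conjugacy_ftilde_of_lt (a := -1) (b := 1) (by norm_num)
      (by convert hx using 2; norm_num)⟩
  · exact ⟨_, fun x hx => conjugacy_ftilde_of_neg (a := -1) (b := 1) (by norm_num) (by norm_num)
      (by convert hx using 2; norm_num)⟩
  · exact ⟨_, fun x hx => (conjugacy_ftilde_of_pos (a := -1) (b := 1) (by norm_num) (by norm_num)
      (by convert hx using 2; norm_num)).trans (sub_eq_add_neg _ _)⟩
  · exact ⟨_, fun x hx => conjugacy_ftilde_of_ge (a := -1) (b := 1) (by norm_num) (by norm_num)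
      (by convert hx using 2; norm_num)⟩
  · exact ⟨_, fun x hx => conjugacy_ftilde_of_lt (a := -1/2) (b := 1/2) (by norm_num)
      (by convert hx using 2; norm_num)⟩
  · exact ⟨_, fun x hx => conjugacy_ftilde_of_neg (a := -1/2) (b := 1/2) (by norm_num) (by norm_num)
      (by convert hx using 2; norm_num)⟩
  · exact ⟨_, fun x hx => (conjugacy_ftilde_of_pos (a := -1/2) (b := 1/2) (by norm_num)
      (by norm_num) (by convert hx using 2; norm_num)).trans (sub_eq_add_neg _ _)⟩
  · exact ⟨_, fun x hx => conjugacy_ftilde_of_ge (a := -1/2) (b := 1/2) (by norm_num) (by norm_num)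
      (by convert hx using 2; norm_num)⟩
end

section
/- There exists an increasing homeomorphism ψ : [-1,1] → [-1,1] with ψ(-1) = -1 and ψ(1) = 1 such that, with λ = (1+√5)/2: (i) ψ(T̃(ψ⁻¹(x))) = λx + (λ-1) for all x ∈ ψ([-1,-1/3)); (ii) ψ(S̃(ψ⁻¹(x))) = λx + 1 for all x ∈ ψ([-1/2,0)); (iii) ψ(S̃(ψ⁻¹(x))) = λx - 1 for all x ∈ ψ((0,1/2)); (iv) ψ(T̃⁻¹(ψ⁻¹(x))) = λx + (1-λ) for all x ∈ ψ([1/3,1)). -/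
open Set Real
open scoped BoundedContinuousFunction

section Order

variable {α β : Type*} [LinearOrder α] {a b c : α} {f : α → β}

theorem MonotoneOn.Icc_union_Icc [Preorder β] (hab : a ≤ b) (hbc : b ≤ c)
    (h₁ : MonotoneOn f (Icc a b)) (h₂ : MonotoneOn f (Icc b c)) : MonotoneOn f (Icc a c) :=
  Icc_union_Icc_eq_Icc hab hbc ▸ h₁.union_right h₂ (isGreatest_Icc hab) (isLeast_Icc hbc)

theorem ContinuousOn.Icc_union_Icc [TopologicalSpace α] [OrderClosedTopology α]
    [TopologicalSpace β] (hab : a ≤ b) (hbc : b ≤ c)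
    (h₁ : ContinuousOn f (Icc a b)) (h₂ : ContinuousOn f (Icc b c)) : ContinuousOn f (Icc a c) :=
  Icc_union_Icc_eq_Icc hab hbc ▸ h₁.union_of_isClosed h₂ isClosed_Icc isClosed_Icc

end Order

section Extension

variable {α β : Type*} [LinearOrder α] [TopologicalSpace α] [OrderTopology α]
  [CompactIccSpace α] [PseudoMetricSpace β] {a b : α}

noncomputable def extendIcc (hab : a ≤ b) (g : α → β) (hg : ContinuousOn g (Icc a b)) :
    α →ᵇ β :=
  (BoundedContinuousFunction.mkOfCompact ⟨(Icc a b).domRestrict g, hg.domRestrict⟩).compContinuous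
    ⟨projIcc a b hab, continuous_projIcc⟩

theorem extendIcc_apply (hab : a ≤ b) (g : α → β) (hg : ContinuousOn g (Icc a b)) (x : α) :
    extendIcc hab g hg x = g (projIcc a b hab x) :=
  rfl

theorem extendIcc_of_mem (hab : a ≤ b) (g : α → β) (hg : ContinuousOn g (Icc a b)) {x : α}
    (hx : x ∈ Icc a b) : extendIcc hab g hg x = g x := by
  rw [extendIcc_apply, projIcc_of_mem hab hx]

end Extension

def HasLongerLevelPair (f : ℝ → ℝ) (K : Set ℝ) (ℓ : ℝ) : Prop :=
  ∃ p ∈ K, ∃ q ∈ K, f p = f q ∧ ℓ < q - p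

theorem exists_longest_level_pair {f : ℝ → ℝ} {K : Set ℝ} (hK : IsCompact K)
    (hf : ContinuousOn f K) (hinj : ¬ InjOn f K) :
    ∃ p ∈ K, ∃ q ∈ K, p < q ∧ f p = f q ∧ ¬ HasLongerLevelPair f K (q - p) := by
  obtain ⟨a, ha, b, hb, hab, hne⟩ : ∃ a ∈ K, ∃ b ∈ K, f a = f b ∧ a ≠ b := by
    simpa [InjOn] using hinj
  have hg : ContinuousOn (fun r : ℝ × ℝ => f r.1 - f r.2) (K ×ˢ K) :=
    (hf.comp continuousOn_fst fun _ hr => hr.1).sub (hf.comp continuousOn_snd fun _ hr => hr.2)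
  have hS : IsCompact (K ×ˢ K ∩ (fun r : ℝ × ℝ => f r.1 - f r.2) ⁻¹' {0}) :=
    (hK.prod hK).of_isClosed_subset
      (hg.preimage_isClosed_of_isClosed (hK.prod hK).isClosed isClosed_singleton)
      inter_subset_left
  have mem : ∀ {p q}, p ∈ K → q ∈ K → f p = f q →
      (p, q) ∈ K ×ˢ K ∩ (fun r : ℝ × ℝ => f r.1 - f r.2) ⁻¹' {0} :=
    fun hp hq he => ⟨⟨hp, hq⟩, sub_eq_zero.2 he⟩
  obtain ⟨⟨p, q⟩, ⟨⟨hp, hq⟩, hpq⟩, hmax⟩ :=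
    hS.exists_isMaxOn ⟨_, mem ha hb hab⟩ (continuous_snd.sub continuous_fst).continuousOn
  have hmax' : ∀ {p' q'}, p' ∈ K → q' ∈ K → f p' = f q' → q' - p' ≤ q - p :=
    fun hp' hq' he => hmax (mem hp' hq' he)
  refine ⟨p, hp, q, hq, ?_, sub_eq_zero.1 hpq, fun ⟨p', hp', q', hq', he, hlt⟩ => ?_⟩
  · rcases hne.lt_or_gt with h | h
    · linarith [hmax' ha hb hab]
    · linarith [hmax' hb ha hab.symm]
  · linarith [hmax' hp' hq' he]

theorem sub_lt_one_div_sub_one_div {a b : ℝ} (ha : 0 < a) (hab : a < b) (hb : b ≤ 1) :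
    b - a < 1 / a - 1 / b := by
  have hb0 : 0 < b := ha.trans hab
  rw [div_sub_div _ _ ha.ne' hb0.ne', one_mul, mul_one, lt_div_iff₀ (mul_pos ha hb0)]
  have hab₁ : a * b < 1 := mul_lt_one_of_nonneg_of_lt_one_left ha.le (hab.trans_le hb) hb
  nlinarith [mul_lt_mul_of_pos_left hab₁ (sub_pos.2 hab)]

theorem two_sub_one_div_mem_Icc {x : ℝ} (hx : x ∈ Icc (1/2 : ℝ) 1) :
    2 - 1/x ∈ Icc (0 : ℝ) 1 := by
  obtain ⟨h₁, h₂⟩ := hx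
  have : 1 ≤ 1/x := by rw [le_div_iff₀ (by linarith)]; linarith
  have : 1/x ≤ 2 := by rw [div_le_iff₀ (by linarith)]; linarith
  constructor <;> linarith

theorem neg_two_sub_one_div_mem_Icc {x : ℝ} (hx : x ∈ Icc (-1 : ℝ) (-1/2)) :
    -2 - 1/x ∈ Icc (-1 : ℝ) 0 := by
  have h := two_sub_one_div_mem_Icc (x := -x) ⟨by linarith [hx.2], by linarith [hx.1]⟩
  rw [one_div_neg_eq_neg_one_div] at h
  constructor <;> linarith [h.1, h.2]

theorem two_sub_one_div_lt {x : ℝ} (hx : 0 < x) (hx₁ : x ≠ 1) : 2 - 1/x < x := by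
  rw [sub_lt_comm, lt_div_iff₀ hx]
  nlinarith [sq_pos_of_ne_zero (sub_ne_zero.2 hx₁)]

section Golden

open scoped goldenRatio

theorem inv_goldenRatio_eq_sub_one : φ⁻¹ = φ - 1 := by
  rw [inv_goldenRatio, ← one_sub_goldenConj]
  ring

/-- The four equations are for the branches `T̃`, `S̃`, `S̃`, `T̃⁻¹` of the Markov map; `S̃` is
written `x ± 1` so that both endpoints of its pieces are included. -/
structure IsLinearizing (f : ℝ → ℝ) : Prop where
  continuousOn : ContinuousOn f (Icc (-1) 1)
  monotoneOn : MonotoneOn f (Icc (-1) 1)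
  semiconj_T : ∀ x ∈ Icc (-1 : ℝ) (-1/2), f (-2 - 1/x) = φ * f x + (φ - 1)
  semiconj_S_left : ∀ x ∈ Icc (-1/2 : ℝ) 0, f (x + 1) = φ * f x + 1
  semiconj_S_right : ∀ x ∈ Icc (0 : ℝ) (1/2), f (x - 1) = φ * f x - 1
  semiconj_Tinv : ∀ x ∈ Icc (1/2 : ℝ) 1, f (2 - 1/x) = φ * f x + (1 - φ)

namespace IsLinearizing

variable {f : ℝ → ℝ} {x : ℝ}

theorem neg_comp_neg (hf : IsLinearizing f) : IsLinearizing fun x => -f (-x) where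
  continuousOn := (hf.continuousOn.comp continuousOn_neg fun x hx =>
    ⟨by linarith [hx.2], by linarith [hx.1]⟩).neg
  monotoneOn x hx y hy hxy := neg_le_neg <| hf.monotoneOn ⟨by linarith [hy.2], by linarith [hy.1]⟩
    ⟨by linarith [hx.2], by linarith [hx.1]⟩ (neg_le_neg hxy)
  semiconj_T x hx := by
    rw [show -(-2 - 1/x) = 2 - 1/(-x) by ring,
      hf.semiconj_Tinv (-x) ⟨by linarith [hx.2], by linarith [hx.1]⟩]
    ring
  semiconj_S_left x hx := by
    rw [neg_add', hf.semiconj_S_right (-x) ⟨by linarith [hx.2], by linarith [hx.1]⟩]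
    ring
  semiconj_S_right x hx := by
    rw [neg_sub', sub_neg_eq_add,
      hf.semiconj_S_left (-x) ⟨by linarith [hx.2], by linarith [hx.1]⟩]
    ring
  semiconj_Tinv x hx := by
    rw [show -(2 - 1/x) = -2 - 1/(-x) by ring,
      hf.semiconj_T (-x) ⟨by linarith [hx.2], by linarith [hx.1]⟩]
    ring

theorem apply_neg_one (hf : IsLinearizing f) : f (-1) = -1 := by
  have h := hf.semiconj_T (-1) (by norm_num)
  rw [show (-2 : ℝ) - 1/(-1) = -1 by norm_num] at h
  exact mul_left_cancel₀ (sub_ne_zero.2 one_lt_goldenRatio.ne') (by linear_combination -h)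

theorem apply_zero (hf : IsLinearizing f) : f 0 = 0 := by
  have h := hf.semiconj_S_right 0 (by norm_num)
  rw [zero_sub, hf.apply_neg_one] at h
  exact (mul_eq_zero.1 (by linarith : φ * f 0 = 0)).resolve_left goldenRatio_ne_zero

theorem apply_one (hf : IsLinearizing f) : f 1 = 1 := by
  have h := hf.semiconj_S_left 0 (by norm_num)
  rwa [zero_add, hf.apply_zero, mul_zero, zero_add] at h

theorem apply_neg_half (hf : IsLinearizing f) : f (-1/2) = φ - 2 := by
  have h := hf.semiconj_T (-1/2) (by norm_num)
  rw [show (-2 : ℝ) - 1/(-1/2) = 0 by norm_num, hf.apply_zero] at h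
  exact mul_left_cancel₀ goldenRatio_ne_zero (by linear_combination -h - goldenRatio_sq)

theorem apply_half (hf : IsLinearizing f) : f (1/2) = 2 - φ := by
  have h := hf.semiconj_Tinv (1/2) (by norm_num)
  rw [show (2 : ℝ) - 1/(1/2) = 0 by norm_num, hf.apply_zero] at h
  exact mul_left_cancel₀ goldenRatio_ne_zero (by linear_combination -h + goldenRatio_sq)

theorem eq_one_of_apply_eq_one (hf : IsLinearizing f) (hx : x ∈ Icc (-1 : ℝ) 1) (h : f x = 1) :
    x = 1 := by
  have hcpt : IsCompact (Icc (-1 : ℝ) 1 ∩ f ⁻¹' {1}) :=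
    isCompact_Icc.of_isClosed_subset
      (hf.continuousOn.preimage_isClosed_of_isClosed isClosed_Icc isClosed_singleton)
      inter_subset_left
  obtain ⟨u, ⟨hu, hfu⟩, hmin⟩ := hcpt.exists_isLeast ⟨x, hx, h⟩
  have hfu : f u = 1 := hfu
  have hu_half : 1/2 < u := by
    by_contra! hle
    have := hf.monotoneOn hu (by norm_num) hle
    rw [hfu, hf.apply_half] at this
    linarith [one_lt_goldenRatio]
  have hu_one : u = 1 := by
    by_contra hne
    have hmem : 2 - 1/u ∈ Icc (-1 : ℝ) 1 ∩ f ⁻¹' {1} := by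
      refine ⟨Icc_subset_Icc (by norm_num) le_rfl
        (two_sub_one_div_mem_Icc ⟨hu_half.le, hu.2⟩), ?_⟩
      rw [mem_preimage, hf.semiconj_Tinv u ⟨hu_half.le, hu.2⟩, hfu, mem_singleton_iff]
      ring
    linarith [hmin hmem, two_sub_one_div_lt (by linarith) hne]
  linarith [hmin ⟨hx, h⟩, hx.2]

theorem eq_neg_one_of_apply_eq_neg_one (hf : IsLinearizing f) (hx : x ∈ Icc (-1 : ℝ) 1)
    (h : f x = -1) : x = -1 := by
  have := hf.neg_comp_neg.eq_one_of_apply_eq_one (x := -x)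
    ⟨by linarith [hx.2], by linarith [hx.1]⟩ (by simp [h])
  linarith

theorem eq_zero_of_apply_eq_zero_of_nonpos (hf : IsLinearizing f) (hx : x ∈ Icc (-1 : ℝ) 0)
    (h : f x = 0) : x = 0 := by
  rcases lt_or_ge x (-1/2) with hlt | hle
  · have := hf.monotoneOn ⟨hx.1, by linarith⟩ (by norm_num) hlt.le
    rw [h, hf.apply_neg_half] at this
    linarith [goldenRatio_lt_two]
  · have h₁ := hf.semiconj_S_left x ⟨hle, hx.2⟩
    rw [h, mul_zero, zero_add] at h₁
    linarith [hf.eq_one_of_apply_eq_one ⟨by linarith, by linarith [hx.2]⟩ h₁]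

theorem eq_zero_of_apply_eq_zero (hf : IsLinearizing f) (hx : x ∈ Icc (-1 : ℝ) 1)
    (h : f x = 0) : x = 0 := by
  rcases le_total x 0 with hx₀ | hx₀
  · exact hf.eq_zero_of_apply_eq_zero_of_nonpos ⟨hx.1, hx₀⟩ h
  · have := hf.neg_comp_neg.eq_zero_of_apply_eq_zero_of_nonpos (x := -x)
      ⟨by linarith [hx.2], by linarith⟩ (by simp [h])
    linarith

theorem eq_half_of_apply_eq_of_half_le (hf : IsLinearizing f) (hx : x ∈ Icc (1/2 : ℝ) 1)
    (h : f x = 2 - φ) : x = 1/2 := by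
  have h₀ : f (2 - 1/x) = 0 := by
    rw [hf.semiconj_Tinv x hx, h]
    linear_combination -goldenRatio_sq
  have := hf.eq_zero_of_apply_eq_zero
    (Icc_subset_Icc (by norm_num) le_rfl (two_sub_one_div_mem_Icc hx)) h₀
  have hx₀ : x ≠ 0 := by linarith [hx.1]
  field_simp at this
  linarith

theorem eq_neg_half_of_apply_eq (hf : IsLinearizing f) (hx : x ∈ Icc (-1 : ℝ) 1)
    (h : f x = φ - 2) : x = -1/2 := by
  rcases le_or_gt x (-1/2) with h₁ | h₁
  · have := hf.neg_comp_neg.eq_half_of_apply_eq_of_half_le (x := -x)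
      ⟨by linarith, by linarith [hx.1]⟩ (by rw [neg_neg, h]; ring)
    linarith
  rcases le_or_gt x 0 with h₂ | h₂
  · have h₃ : f (x + 1) = 2 - φ := by
      rw [hf.semiconj_S_left x ⟨h₁.le, h₂⟩, h]
      linear_combination goldenRatio_sq
    linarith [hf.eq_half_of_apply_eq_of_half_le ⟨by linarith, by linarith⟩ h₃]
  · have := hf.monotoneOn (by norm_num) hx h₂.le
    rw [hf.apply_zero, h] at this
    linarith [goldenRatio_lt_two]

theorem eq_half_of_apply_eq (hf : IsLinearizing f) (hx : x ∈ Icc (-1 : ℝ) 1)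
    (h : f x = 2 - φ) : x = 1/2 := by
  have := hf.neg_comp_neg.eq_neg_half_of_apply_eq (x := -x)
    ⟨by linarith [hx.2], by linarith [hx.1]⟩ (by rw [neg_neg, h]; ring)
  linarith

variable {p q : ℝ}

theorem hasLongerLevelPair_of_Tinv (hf : IsLinearizing f) (hp : 1/2 ≤ p) (hpq : p < q) (hq : q < 1)
    (he : f p = f q) : HasLongerLevelPair f (Icc (-1) 1) (q - p) := by
  have hp' : p ∈ Icc (1/2 : ℝ) 1 := ⟨hp, by linarith⟩
  have hq' : q ∈ Icc (1/2 : ℝ) 1 := ⟨by linarith, hq.le⟩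
  refine ⟨2 - 1/p, Icc_subset_Icc (by norm_num) le_rfl (two_sub_one_div_mem_Icc hp'),
    2 - 1/q, Icc_subset_Icc (by norm_num) le_rfl (two_sub_one_div_mem_Icc hq'),
    by rw [hf.semiconj_Tinv p hp', hf.semiconj_Tinv q hq', he], ?_⟩
  linarith [sub_lt_one_div_sub_one_div (by linarith) hpq hq.le]

theorem hasLongerLevelPair_of_T (hf : IsLinearizing f) (hp : -1 < p) (hpq : p < q) (hq : q ≤ -1/2)
    (he : f p = f q) : HasLongerLevelPair f (Icc (-1) 1) (q - p) := by
  have hp' : p ∈ Icc (-1 : ℝ) (-1/2) := ⟨hp.le, by linarith⟩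
  have hq' : q ∈ Icc (-1 : ℝ) (-1/2) := ⟨by linarith, hq⟩
  refine ⟨-2 - 1/p, Icc_subset_Icc le_rfl (by norm_num) (neg_two_sub_one_div_mem_Icc hp'),
    -2 - 1/q, Icc_subset_Icc le_rfl (by norm_num) (neg_two_sub_one_div_mem_Icc hq'),
    by rw [hf.semiconj_T p hp', hf.semiconj_T q hq', he], ?_⟩
  have := sub_lt_one_div_sub_one_div (a := -q) (b := -p) (by linarith) (by linarith) (by linarith)
  rw [one_div_neg_eq_neg_one_div, one_div_neg_eq_neg_one_div] at this
  linarith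

theorem hasLongerLevelPair_of_S_left (hf : IsLinearizing f) (hp : -1/2 ≤ p) (hpq : p < q)
    (hq : q < 0) (he : f p = f q) : HasLongerLevelPair f (Icc (-1) 1) (q - p) := by
  have h := hf.hasLongerLevelPair_of_Tinv (p := p + 1) (q := q + 1) (by linarith) (by linarith)
    (by linarith) (by rw [hf.semiconj_S_left p ⟨hp, by linarith⟩,
      hf.semiconj_S_left q ⟨by linarith, hq.le⟩, he])
  rwa [add_sub_add_right_eq_sub] at h

theorem hasLongerLevelPair_of_S_right (hf : IsLinearizing f) (hp : 0 < p) (hpq : p < q)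
    (hq : q ≤ 1/2) (he : f p = f q) : HasLongerLevelPair f (Icc (-1) 1) (q - p) := by
  have h := hf.hasLongerLevelPair_of_T (p := p - 1) (q := q - 1) (by linarith) (by linarith)
    (by linarith) (by rw [hf.semiconj_S_right p ⟨hp.le, by linarith⟩,
      hf.semiconj_S_right q ⟨by linarith, hq⟩, he])
  rwa [sub_sub_sub_cancel_right] at h

theorem injOn (hf : IsLinearizing f) : InjOn f (Icc (-1) 1) := by
  by_contra hinj
  obtain ⟨p, hp, q, hq, hpq, he, hlongest⟩ :=
    exists_longest_level_pair isCompact_Icc hf.continuousOn hinj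
  have avoid : ∀ b v, f b = v → (∀ x ∈ Icc (-1 : ℝ) 1, f x = v → x = b) → b ≤ q → b < p := by
    intro b v hb hinjb hbq
    by_contra! hpb
    have hbI : b ∈ Icc (-1 : ℝ) 1 := ⟨hp.1.trans hpb, hbq.trans hq.2⟩
    have h₁ := hf.monotoneOn hp hbI hpb
    have h₂ := hf.monotoneOn hbI hq hbq
    have := hinjb p hp (by linarith)
    have := hinjb q hq (by linarith)
    linarith
  apply hlongest
  rcases lt_or_ge q (-1/2) with hq₁ | hq₁
  · exact hf.hasLongerLevelPair_of_T (avoid (-1) (-1) hf.apply_neg_one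
      (fun _ => hf.eq_neg_one_of_apply_eq_neg_one) hq.1) hpq hq₁.le he
  have hp₁ := avoid (-1/2) _ hf.apply_neg_half (fun _ => hf.eq_neg_half_of_apply_eq) hq₁
  rcases lt_or_ge q 0 with hq₂ | hq₂
  · exact hf.hasLongerLevelPair_of_S_left hp₁.le hpq hq₂ he
  have hp₂ := avoid 0 0 hf.apply_zero (fun _ => hf.eq_zero_of_apply_eq_zero) hq₂
  rcases lt_or_ge q (1/2) with hq₃ | hq₃
  · exact hf.hasLongerLevelPair_of_S_right hp₂ hpq hq₃.le he
  have hp₃ := avoid (1/2) _ hf.apply_half (fun _ => hf.eq_half_of_apply_eq) hq₃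
  have hq₄ : q < 1 := lt_of_not_ge fun h =>
    (avoid 1 1 hf.apply_one (fun _ => hf.eq_one_of_apply_eq_one) h).not_gt (hpq.trans_le hq.2)
  exact hf.hasLongerLevelPair_of_Tinv hp₃.le hpq hq₄ he

theorem strictMonoOn (hf : IsLinearizing f) : StrictMonoOn f (Icc (-1) 1) :=
  hf.monotoneOn.strictMonoOn_of_injOn hf.injOn

/-- `T̃ (S̃ (T̃ x)) = S̃ (T̃⁻¹ (S̃ x))`, and on both sides only branches of the Markov map are
applied. -/
theorem semiconj_T_of_mem_Icc (hf : IsLinearizing f) (hx : x ∈ Icc (-1/2 : ℝ) (-1/3)) :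
    f ((1 + 2*x) / (2 + 3*x)) = φ * f x + (φ - 1) := by
  obtain ⟨h₁, h₂⟩ := hx
  have hd : 0 < 2 + 3*x := by linarith
  have hd' : 0 < 1 + x := by linarith
  set y := (1 + 2*x) / (2 + 3*x) with hy
  set z := (1 + 2*x) / (1 + x) with hz
  have hy₀ : 0 ≤ y := div_nonneg (by linarith) hd.le
  have hy₁ : y ≤ 1/2 := by rw [hy, div_le_iff₀ hd]; linarith
  have hz₀ : 0 ≤ z := div_nonneg (by linarith) hd'.le
  have hz₁ : z ≤ 1/2 := by rw [hz, div_le_iff₀ hd']; linarith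
  have e₁ : 2 - 1/(x + 1) = z := by
    rw [hz, add_comm x 1, eq_div_iff hd'.ne']
    field_simp
    ring
  have e₂ : -2 - 1/(y - 1) = z - 1 := by
    have : y - 1 = -((1 + x) / (2 + 3*x)) := by rw [hy, div_sub_one hd.ne']; ring
    rw [this, one_div_neg_eq_neg_one_div, one_div_div, hz, div_sub_one hd'.ne', eq_div_iff hd'.ne']
    field_simp
    ring
  have hS := hf.semiconj_S_left x ⟨h₁, by linarith⟩
  have hTinv := hf.semiconj_Tinv (x + 1) ⟨by linarith, by linarith⟩
  have hS' := hf.semiconj_S_right z ⟨hz₀, hz₁⟩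
  have hT := hf.semiconj_T (y - 1) ⟨by linarith, by linarith⟩
  have hS'' := hf.semiconj_S_right y ⟨hy₀, hy₁⟩
  rw [e₁, hS] at hTinv
  rw [e₂, hS', hTinv, hS''] at hT
  exact mul_left_cancel₀ (pow_ne_zero 2 goldenRatio_ne_zero)
    (by linear_combination -hT - φ * goldenRatio_sq)

theorem apply_Ttilde (hf : IsLinearizing f) (hx : x ∈ Icc (-1 : ℝ) (-1/3)) :
    f (Ttilde x) = φ * f x + (φ - 1) := by
  rcases le_or_gt x (-1/2) with h | h
  · rw [Ttilde, if_pos h]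
    exact hf.semiconj_T x ⟨hx.1, h⟩
  · rw [Ttilde, if_neg h.not_ge, if_pos (by linarith [hx.2])]
    exact hf.semiconj_T_of_mem_Icc ⟨h.le, hx.2⟩

theorem Tinvtilde_eq_neg_Ttilde_neg (hx : x ∈ Icc (1/3 : ℝ) 1) : Tinvtilde x = -Ttilde (-x) := by
  obtain ⟨h₁, h₂⟩ := hx
  rcases lt_trichotomy x (1/2) with hlt | rfl | hgt
  · have hne : 3*x - 2 ≠ 0 := by linarith
    have hne' : 2 + 3 * -x ≠ 0 := by linarith
    rw [Tinvtilde, if_neg (by linarith), if_pos hlt.le, Ttilde, if_neg (by linarith),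
      if_pos (by linarith), ← neg_div, div_eq_div_iff hne hne']
    ring
  · norm_num [Tinvtilde, Ttilde]
  · rw [Tinvtilde, if_neg (by linarith), if_neg (by linarith), Ttilde, if_pos (by linarith)]
    ring

theorem apply_Tinvtilde (hf : IsLinearizing f) (hx : x ∈ Icc (1/3 : ℝ) 1) :
    f (Tinvtilde x) = φ * f x + (1 - φ) := by
  have h := hf.neg_comp_neg.apply_Ttilde (x := -x) ⟨by linarith [hx.2], by linarith [hx.1]⟩
  rw [neg_neg] at h
  rw [Tinvtilde_eq_neg_Ttilde_neg hx]
  linarith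

theorem apply_Stilde_of_neg (hf : IsLinearizing f) (hx : x ∈ Ico (-1/2 : ℝ) 0) :
    f (Stilde x) = φ * f x + 1 := by
  rw [Stilde, if_pos hx.2]
  exact hf.semiconj_S_left x ⟨hx.1, hx.2.le⟩

theorem apply_Stilde_of_pos (hf : IsLinearizing f) (hx : x ∈ Ioo (0 : ℝ) (1/2)) :
    f (Stilde x) = φ * f x - 1 := by
  rw [Stilde, if_neg hx.1.not_gt, if_neg hx.1.ne']
  exact hf.semiconj_S_right x (Ioo_subset_Icc_self hx)

end IsLinearizing

noncomputable def markovMap (x : ℝ) : ℝ :=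
  if x ≤ -1/2 then -2 - 1/x else if x ≤ 0 then x + 1 else if x ≤ 1/2 then x - 1 else 2 - 1/x

noncomputable def markovShift (x : ℝ) : ℝ :=
  if x ≤ -1/2 then φ - 1 else if x ≤ 0 then 1 else if x ≤ 1/2 then -1 else 1 - φ

noncomputable def linearizingOp (f : ℝ → ℝ) (x : ℝ) : ℝ :=
  φ⁻¹ * (f (markovMap x) - markovShift x)

/-- The values at the breakpoints are those forced on a linearizing map; they make
`linearizingOp f` continuous at the breakpoints. -/
def admissible : Set (ℝ →ᵇ ℝ) :=
  {f | f (-1) = -1 ∧ f (-1/2) = φ - 2 ∧ f 0 = 0 ∧ f (1/2) = 2 - φ ∧ f 1 = 1 ∧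
    MonotoneOn f (Icc (-1) 1)}

section LinearizingOp

variable {f : ℝ →ᵇ ℝ} {x : ℝ}

theorem linearizingOp_of_mem_T {f : ℝ → ℝ} (hx : x ∈ Icc (-1 : ℝ) (-1/2)) :
    linearizingOp f x = φ⁻¹ * (f (-2 - 1/x) - (φ - 1)) := by
  simp only [linearizingOp, markovMap, markovShift, if_pos hx.2]

theorem linearizingOp_of_mem_S_left (hf : f ∈ admissible) (hx : x ∈ Icc (-1/2 : ℝ) 0) :
    linearizingOp f x = φ⁻¹ * (f (x + 1) - 1) := by
  obtain ⟨-, -, hzero, hhalf, -⟩ := hf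
  rcases hx.1.eq_or_lt with rfl | hlt
  · rw [linearizingOp, markovMap, markovShift, if_pos le_rfl, if_pos le_rfl,
      show (-2 : ℝ) - 1/(-1/2) = 0 by norm_num, show (-1/2 : ℝ) + 1 = 1/2 by norm_num, hzero,
      hhalf]
    ring
  · simp only [linearizingOp, markovMap, markovShift, if_neg hlt.not_ge, if_pos hx.2]

theorem linearizingOp_of_mem_S_right (hf : f ∈ admissible) (hx : x ∈ Icc (0 : ℝ) (1/2)) :
    linearizingOp f x = φ⁻¹ * (f (x - 1) + 1) := by
  obtain ⟨hneg_one, -, -, -, hone, -⟩ := hf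
  rcases hx.1.eq_or_lt with rfl | hlt
  · norm_num [linearizingOp, markovMap, markovShift, hneg_one, hone]
  · simp only [linearizingOp, markovMap, markovShift, if_neg (by linarith : ¬ x ≤ -1/2),
      if_neg hlt.not_ge, if_pos hx.2, sub_neg_eq_add]

theorem linearizingOp_of_mem_Tinv (hf : f ∈ admissible) (hx : x ∈ Icc (1/2 : ℝ) 1) :
    linearizingOp f x = φ⁻¹ * (f (2 - 1/x) - (1 - φ)) := by
  obtain ⟨-, hneg_half, hzero, -⟩ := hf
  rcases hx.1.eq_or_lt with rfl | hlt
  · rw [linearizingOp, markovMap, markovShift, if_neg (by norm_num), if_neg (by norm_num),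
      if_pos le_rfl, if_neg (by norm_num), if_neg (by norm_num), if_pos le_rfl,
      show (1/2 : ℝ) - 1 = -1/2 by norm_num, show (2 : ℝ) - 1/(1/2) = 0 by norm_num,
      hneg_half, hzero]
    ring
  · simp only [linearizingOp, markovMap, markovShift, if_neg (by linarith : ¬ x ≤ -1/2),
      if_neg (by linarith : ¬ x ≤ 0), if_neg hlt.not_ge]

theorem continuousOn_branch {f g : ℝ → ℝ} {s : Set ℝ} (c : ℝ)
    (hf : ContinuousOn f (Icc (-1) 1)) (hg : ContinuousOn g s) (hgs : MapsTo g s (Icc (-1) 1)) :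
    ContinuousOn (fun x => φ⁻¹ * (f (g x) - c)) s :=
  continuousOn_const.mul ((hf.comp hg hgs).sub continuousOn_const)

theorem monotoneOn_branch {f g : ℝ → ℝ} {s : Set ℝ} (c : ℝ)
    (hf : MonotoneOn f (Icc (-1) 1)) (hg : MonotoneOn g s) (hgs : MapsTo g s (Icc (-1) 1)) :
    MonotoneOn (fun x => φ⁻¹ * (f (g x) - c)) s := fun _ hx _ hy hxy =>
  mul_le_mul_of_nonneg_left (sub_le_sub_right (hf (hgs hx) (hgs hy) (hg hx hy hxy)) c)
    (inv_nonneg.2 goldenRatio_pos.le)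

theorem mapsTo_neg_two_sub_one_div :
    MapsTo (fun x : ℝ => -2 - 1/x) (Icc (-1) (-1/2)) (Icc (-1) 1) := fun _ hx =>
  Icc_subset_Icc le_rfl (by norm_num) (neg_two_sub_one_div_mem_Icc hx)

theorem continuousOn_neg_two_sub_one_div :
    ContinuousOn (fun x : ℝ => -2 - 1/x) (Icc (-1) (-1/2)) :=
  continuousOn_const.sub <| continuousOn_const.div continuousOn_id fun x hx =>
    (by linarith [hx.2] : x < 0).ne

theorem monotoneOn_neg_two_sub_one_div : MonotoneOn (fun x : ℝ => -2 - 1/x) (Icc (-1) (-1/2)) :=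
  fun _ _ _ hy hxy =>
    sub_le_sub_left (one_div_le_one_div_of_neg_of_le (by linarith [hy.2]) hxy) (-2)

theorem mapsTo_two_sub_one_div : MapsTo (fun x : ℝ => 2 - 1/x) (Icc (1/2) 1) (Icc (-1) 1) :=
  fun _ hx => Icc_subset_Icc (by norm_num) le_rfl (two_sub_one_div_mem_Icc hx)

theorem continuousOn_two_sub_one_div : ContinuousOn (fun x : ℝ => 2 - 1/x) (Icc (1/2) 1) :=
  continuousOn_const.sub <| continuousOn_const.div continuousOn_id fun x hx =>
    (by linarith [hx.1] : 0 < x).ne'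

theorem monotoneOn_two_sub_one_div : MonotoneOn (fun x : ℝ => 2 - 1/x) (Icc (1/2) 1) :=
  fun _ hx _ _ hxy => sub_le_sub_left (one_div_le_one_div_of_le (by linarith [hx.1]) hxy) 2

theorem mapsTo_add_one : MapsTo (fun x : ℝ => x + 1) (Icc (-1/2) 0) (Icc (-1) 1) :=
  fun _ hx => ⟨by linarith [hx.1], by linarith [hx.2]⟩

theorem mapsTo_sub_one : MapsTo (fun x : ℝ => x - 1) (Icc 0 (1/2)) (Icc (-1) 1) :=
  fun _ hx => ⟨by linarith [hx.1], by linarith [hx.2]⟩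

theorem continuousOn_linearizingOp (hf : f ∈ admissible) :
    ContinuousOn (linearizingOp f) (Icc (-1) 1) := by
  have hc := f.continuous.continuousOn (s := Icc (-1) 1)
  have hT : ContinuousOn (linearizingOp f) (Icc (-1) (-1/2)) :=
    (continuousOn_branch (φ - 1) hc continuousOn_neg_two_sub_one_div
      mapsTo_neg_two_sub_one_div).congr fun x hx => linearizingOp_of_mem_T hx
  have hSl : ContinuousOn (linearizingOp f) (Icc (-1/2) 0) :=
    (continuousOn_branch (g := fun x => x + 1) 1 hc (by fun_prop) mapsTo_add_one).congr
      fun x hx => linearizingOp_of_mem_S_left hf hx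
  have hSr : ContinuousOn (linearizingOp f) (Icc 0 (1/2)) :=
    (continuousOn_branch (g := fun x => x - 1) (-1) hc (by fun_prop) mapsTo_sub_one).congr
      fun x hx => by simp only [linearizingOp_of_mem_S_right hf hx, sub_neg_eq_add]
  have hTinv : ContinuousOn (linearizingOp f) (Icc (1/2) 1) :=
    (continuousOn_branch (1 - φ) hc continuousOn_two_sub_one_div mapsTo_two_sub_one_div).congr
      fun x hx => linearizingOp_of_mem_Tinv hf hx
  exact hT.Icc_union_Icc (by norm_num) (by norm_num) <| hSl.Icc_union_Icc (by norm_num)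
    (by norm_num) <| hSr.Icc_union_Icc (by norm_num) (by norm_num) hTinv

theorem monotoneOn_linearizingOp (hf : f ∈ admissible) :
    MonotoneOn (linearizingOp f) (Icc (-1) 1) := by
  have hm : MonotoneOn f (Icc (-1) 1) := hf.2.2.2.2.2
  have hT : MonotoneOn (linearizingOp f) (Icc (-1) (-1/2)) :=
    (monotoneOn_branch (φ - 1) hm monotoneOn_neg_two_sub_one_div
      mapsTo_neg_two_sub_one_div).congr fun x hx => (linearizingOp_of_mem_T hx).symm
  have hSl : MonotoneOn (linearizingOp f) (Icc (-1/2) 0) :=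
    (monotoneOn_branch (g := fun x => x + 1) 1 hm (fun x _ y _ hxy => by simpa using hxy)
      mapsTo_add_one).congr fun x hx => (linearizingOp_of_mem_S_left hf hx).symm
  have hSr : MonotoneOn (linearizingOp f) (Icc 0 (1/2)) :=
    (monotoneOn_branch (g := fun x => x - 1) (-1) hm (fun x _ y _ hxy => by simpa using hxy)
      mapsTo_sub_one).congr
      fun x hx => by simp only [linearizingOp_of_mem_S_right hf hx, sub_neg_eq_add]
  have hTinv : MonotoneOn (linearizingOp f) (Icc (1/2) 1) :=
    (monotoneOn_branch (1 - φ) hm monotoneOn_two_sub_one_div mapsTo_two_sub_one_div).congr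
      fun x hx => (linearizingOp_of_mem_Tinv hf hx).symm
  exact hT.Icc_union_Icc (by norm_num) (by norm_num) <| hSl.Icc_union_Icc (by norm_num)
    (by norm_num) <| hSr.Icc_union_Icc (by norm_num) (by norm_num) hTinv

theorem extendIcc_linearizingOp_mem (hf : f ∈ admissible) :
    extendIcc (by norm_num) (linearizingOp f) (continuousOn_linearizingOp hf) ∈ admissible := by
  have ⟨hneg_one, hneg_half, hzero, hhalf, hone, _⟩ := hf
  refine ⟨?_, ?_, ?_, ?_, ?_, (monotoneOn_linearizingOp hf).congr fun x hx =>
    (extendIcc_of_mem _ _ _ hx).symm⟩ <;> rw [extendIcc_of_mem _ _ _ (by norm_num)]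
  · rw [linearizingOp_of_mem_T (by norm_num), show (-2 : ℝ) - 1/(-1) = -1 by norm_num, hneg_one,
      inv_goldenRatio_eq_sub_one]
    linear_combination -goldenRatio_sq
  · rw [linearizingOp_of_mem_T (by norm_num), show (-2 : ℝ) - 1/(-1/2) = 0 by norm_num, hzero,
      inv_goldenRatio_eq_sub_one]
    linear_combination -goldenRatio_sq
  · rw [linearizingOp_of_mem_S_left hf (by norm_num), zero_add, hone, sub_self, mul_zero]
  · rw [linearizingOp_of_mem_S_right hf (by norm_num), show (1/2 : ℝ) - 1 = -1/2 by norm_num,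
      hneg_half, inv_goldenRatio_eq_sub_one]
    linear_combination goldenRatio_sq
  · rw [linearizingOp_of_mem_Tinv hf (by norm_num), show (2 : ℝ) - 1/1 = 1 by norm_num, hone,
      inv_goldenRatio_eq_sub_one]
    linear_combination goldenRatio_sq

theorem dist_linearizingOp_le (f g : ℝ →ᵇ ℝ) (x : ℝ) :
    dist (linearizingOp f x) (linearizingOp g x) ≤ φ⁻¹ * dist f g := by
  rw [Real.dist_eq, linearizingOp, linearizingOp, ← mul_sub, sub_sub_sub_cancel_right, abs_mul,
    abs_of_pos (inv_pos.2 goldenRatio_pos), ← Real.dist_eq]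
  exact mul_le_mul_of_nonneg_left (BoundedContinuousFunction.dist_coe_le_dist _)
    (inv_nonneg.2 goldenRatio_pos.le)

end LinearizingOp

theorem isClosed_admissible : IsClosed admissible := by
  have hev : ∀ a b : ℝ, IsClosed {f : ℝ →ᵇ ℝ | f a = b} := fun a b =>
    isClosed_eq (continuous_eval_const a) continuous_const
  exact (hev _ _).inter <| (hev _ _).inter <| (hev _ _).inter <| (hev _ _).inter <|
    (hev _ _).inter (isClosed_monotoneOn.preimage BoundedContinuousFunction.continuous_coe)

theorem admissible_nonempty : admissible.Nonempty := by
  -- an odd cubic, whose linear coefficient `a` makes its value at `1/2` equal to `2 - φ`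
  have ha : 0 ≤ (15 - 8 * φ) / 3 := by nlinarith [goldenRatio_sq, goldenRatio_pos]
  have ha' : 0 ≤ 1 - (15 - 8 * φ) / 3 := by nlinarith [goldenRatio_sq, goldenRatio_pos]
  set a := (15 - 8 * φ) / 3 with ha_def
  have hcont : Continuous fun t : ℝ => a * t + (1 - a) * t ^ 3 := by fun_prop
  have hmono : Monotone fun t : ℝ => a * t + (1 - a) * t ^ 3 :=
    (monotone_id.const_mul ha).add ((Odd.strictMono_pow (by decide)).monotone.const_mul ha')
  refine ⟨extendIcc (by norm_num : (-1 : ℝ) ≤ 1) _ hcont.continuousOn, ?_, ?_, ?_, ?_, ?_,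
    (hmono.monotoneOn _).congr fun x hx => by rw [extendIcc_of_mem _ _ _ hx]⟩ <;>
  · rw [extendIcc_of_mem _ _ _ (by norm_num), ha_def]
    ring

noncomputable def linearizingMap (f : admissible) : admissible :=
  ⟨extendIcc (by norm_num) (linearizingOp f) (continuousOn_linearizingOp f.2),
    extendIcc_linearizingOp_mem f.2⟩

theorem contractingWith_linearizingMap :
    ContractingWith ⟨φ⁻¹, inv_nonneg.2 goldenRatio_pos.le⟩ linearizingMap := by
  refine ⟨inv_lt_one_of_one_lt₀ one_lt_goldenRatio, LipschitzWith.of_dist_le_mul fun f g => ?_⟩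
  rw [Subtype.dist_eq]
  exact (BoundedContinuousFunction.dist_le (mul_nonneg (NNReal.coe_nonneg _) dist_nonneg)).2
    fun x => dist_linearizingOp_le f g _

theorem exists_isLinearizing : ∃ f : ℝ → ℝ, IsLinearizing f := by
  have : Nonempty admissible := admissible_nonempty.to_subtype
  have : CompleteSpace admissible := isClosed_admissible.completeSpace_coe
  obtain ⟨g, hg⟩ : ∃ g, linearizingMap g = g :=
    ⟨_, contractingWith_linearizingMap.fixedPoint_isFixedPt⟩
  have hfix : ∀ x ∈ Icc (-1 : ℝ) 1, g.1 x = linearizingOp g.1 x := fun x hx => by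
    conv_lhs => rw [← hg]
    exact extendIcc_of_mem _ _ (continuousOn_linearizingOp g.2) hx
  have hmono : MonotoneOn g.1 (Icc (-1) 1) := g.2.2.2.2.2.2
  refine ⟨g.1, g.1.continuous.continuousOn, hmono, fun x hx => ?_, fun x hx => ?_,
    fun x hx => ?_, fun x hx => ?_⟩
  · rw [hfix x (Icc_subset_Icc le_rfl (by norm_num) hx), linearizingOp_of_mem_T hx,
      mul_inv_cancel_left₀ goldenRatio_ne_zero]
    ring
  · rw [hfix x (Icc_subset_Icc (by norm_num) (by norm_num) hx), linearizingOp_of_mem_S_left g.2 hx,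
      mul_inv_cancel_left₀ goldenRatio_ne_zero]
    ring
  · rw [hfix x (Icc_subset_Icc (by norm_num) (by norm_num) hx),
      linearizingOp_of_mem_S_right g.2 hx, mul_inv_cancel_left₀ goldenRatio_ne_zero]
    ring
  · rw [hfix x (Icc_subset_Icc (by norm_num) le_rfl hx), linearizingOp_of_mem_Tinv g.2 hx,
      mul_inv_cancel_left₀ goldenRatio_ne_zero]
    ring

end Golden

/-- There is an increasing homeomorphism `ψ` of `[-1,1]` fixing `±1` such that, with
`λ = (1+√5)/2`: `ψ ∘ T̃ ∘ ψ⁻¹ (x) = λx + (λ-1)` on `ψ([-1,-1/3))`,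
`ψ ∘ S̃ ∘ ψ⁻¹ (x) = λx + 1` on `ψ([-1/2,0))`, `ψ ∘ S̃ ∘ ψ⁻¹ (x) = λx - 1` on `ψ((0,1/2))`,
and `ψ ∘ T̃⁻¹ ∘ ψ⁻¹ (x) = λx + (1-λ)` on `ψ([1/3,1))`. (Each condition
"`ψ(f(ψ⁻¹ y)) = λy + c` for all `y ∈ ψ(I)`" is expressed equivalently as
`∀ x ∈ I, ψ (f x) = λ * ψ x + c`.) -/
theorem exists_conjugacy_linearizing_generators :
    ∃ ψ : ℝ → ℝ,
      ContinuousOn ψ (Set.Icc (-1) 1) ∧ StrictMonoOn ψ (Set.Icc (-1) 1) ∧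
      ψ (-1) = -1 ∧ ψ 1 = 1 ∧
      (∀ x ∈ Set.Ico (-1 : ℝ) (-1/3),
        ψ (Ttilde x) = (1 + Real.sqrt 5) / 2 * ψ x + ((1 + Real.sqrt 5) / 2 - 1)) ∧
      (∀ x ∈ Set.Ico (-1/2 : ℝ) 0,
        ψ (Stilde x) = (1 + Real.sqrt 5) / 2 * ψ x + 1) ∧
      (∀ x ∈ Set.Ioo (0 : ℝ) (1/2),
        ψ (Stilde x) = (1 + Real.sqrt 5) / 2 * ψ x - 1) ∧
      (∀ x ∈ Set.Ico (1/3 : ℝ) 1,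
        ψ (Tinvtilde x) = (1 + Real.sqrt 5) / 2 * ψ x + (1 - (1 + Real.sqrt 5) / 2)) := by
  obtain ⟨f, hf⟩ := exists_isLinearizing
  exact ⟨f, hf.continuousOn, hf.strictMonoOn, hf.apply_neg_one, hf.apply_one,
    fun x hx => hf.apply_Ttilde (Ico_subset_Icc_self hx), fun x hx => hf.apply_Stilde_of_neg hx,
    fun x hx => hf.apply_Stilde_of_pos hx,
    fun x hx => hf.apply_Tinvtilde (Ico_subset_Icc_self hx)⟩
end

section
/- The slow Gauss map is a factor of the Artin continued fraction map via the absolute value: for every real number x with x ∉ {-1, 0}, one has g(|x|) = |f_{-1,1}(x)|. -/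
/-- The slow Gauss map `g` (on the positive reals): `g(y) = 1/y` for `0 < y < 1`
and `g(y) = y - 1` for `y ≥ 1`. -/
noncomputable def slowGauss (y : ℝ) : ℝ :=
  if y < 1 then 1 / y else y - 1

/-- The `(-1,1)`-continued fraction (Artin) map `f_{-1,1} : ℝ → ℝ`. -/
noncomputable def fArtin (x : ℝ) : ℝ :=
  if x < -1 then x + 1 else if x < 1 then -1 / x else x - 1

/-!
On `[0, ∞)` the map `|f_{-1,1}|` is `g` itself, and away from `±1` the Artin map is odd, so
`|f_{-1,1}(x)| = |f_{-1,1}(-x)| = g(-x)` for negative `x ≠ -1`. At `x = -1` oddness fails: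
`f_{-1,1}(-1) = 1` but `f_{-1,1}(1) = 0`.
-/

section

variable {x y : ℝ}

theorem slowGauss_of_lt_one (hy : y < 1) : slowGauss y = 1 / y := if_pos hy

theorem slowGauss_of_one_le (hy : 1 ≤ y) : slowGauss y = y - 1 := if_neg hy.not_gt

theorem fArtin_of_lt_neg_one (hx : x < -1) : fArtin x = x + 1 := if_pos hx

theorem fArtin_of_abs_lt_one (hx : |x| < 1) : fArtin x = -1 / x := by
  rw [abs_lt] at hx
  rw [fArtin, if_neg hx.1.not_gt, if_pos hx.2]

theorem fArtin_of_one_le (hx : 1 ≤ x) : fArtin x = x - 1 := by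
  rw [fArtin, if_neg (by linarith), if_neg hx.not_gt]

theorem fArtin_neg (hx : |x| ≠ 1) : fArtin (-x) = -fArtin x := by
  rcases lt_trichotomy |x| 1 with hlt | heq | hgt
  · rw [fArtin_of_abs_lt_one hlt, fArtin_of_abs_lt_one (by rwa [abs_neg]), div_neg, neg_div]
  · exact absurd heq hx
  · rcases lt_max_iff.mp hgt with hpos | hneg
    · rw [fArtin_of_lt_neg_one (by linarith), fArtin_of_one_le hpos.le]
      ring
    · rw [fArtin_of_one_le (by linarith), fArtin_of_lt_neg_one (by linarith)]
      ring

theorem abs_fArtin_of_nonneg (hx : 0 ≤ x) : |fArtin x| = slowGauss x := by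
  rcases lt_or_ge x 1 with hlt | hge
  · rw [fArtin_of_abs_lt_one (by rwa [abs_of_nonneg hx]), slowGauss_of_lt_one hlt, abs_div,
      abs_neg, abs_one, abs_of_nonneg hx]
  · rw [fArtin_of_one_le hge, slowGauss_of_one_le hge, abs_of_nonneg (by linarith)]

end

theorem slowGauss_factor_of_artin_general (x : ℝ) (h1 : x ≠ -1) :
    slowGauss |x| = |fArtin x| := by
  rcases le_or_gt 0 x with hx | hx
  · rw [abs_of_nonneg hx, abs_fArtin_of_nonneg hx]
  · have habs : |x| ≠ 1 := by
      rw [abs_of_neg hx]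
      contrapose! h1
      linarith
    rw [← abs_neg (fArtin x), ← fArtin_neg habs, abs_of_neg hx, abs_fArtin_of_nonneg (by linarith)]

/-- The slow Gauss map is a factor of the Artin map via the absolute value:
`g(|x|) = |f_{-1,1}(x)|` for all `x ∉ {-1, 0}`. -/
theorem slowGauss_factor_of_artin (x : ℝ) (h1 : x ≠ -1) (h0 : x ≠ 0) :
    slowGauss |x| = |fArtin x| :=
  slowGauss_factor_of_artin_general x h1
end
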